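/- Let p be a prime, r ≥ 1, k = (k₁,…,k_r) a tuple of positive integers, and a ∈ ℤ. For a tuple j = (j₁,…,j_r) of positive integers set S(j) := ∑_{0<n₁<⋯<n_r<p} ∏_{i=1}^{r} n_i^{−j_i} ∈ ℚ_p (each n_i is invertible in ℚ_p since 0 < n_i < p). Then the series ∑_{N=0}^{∞} (∑_{m∈ℤ_{≥0}^r, m₁+⋯+m_r=N} (∏_{i=1}^{r} C(k_i+m_i−1, m_i))·S(k⊕m))·(−ap)^N converges in ℚ_p, and its sum equals the finite sum ∑_{0<n₁<⋯<n_r<p} ∏_{i=1}^{r} (n_i + ap)^{−k_i} (each n_i + ap is invertible in ℚ_p since p ∤ n_i). -/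
import Mathlib


/- STATEMENT 15: the p-adic expansion of the shifted finite multiple harmonic sum:
∑_{N≥0} (∑_{|m|=N} (∏ C(k_i+m_i−1,m_i)) S(k⊕m)) (−ap)^N converges in ℚ_p to
∑_{0<n₁<⋯<n_r<p} ∏ (n_i+ap)^{−k_i}. -/

noncomputable section

/-- The finite multiple harmonic sum `S(j) = ∑_{0<n₁<⋯<n_r<p} ∏ n_i^{-j_i}` in `ℚ_p`. -/
def Spr (p : ℕ) [Fact p.Prime] (r : ℕ) (j : Fin r → ℕ) : ℚ_[p] :=
  ∑ n ∈ Finset.univ.filter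
      (fun n : Fin r → Fin p => StrictMono (fun i => (n i : ℕ)) ∧ ∀ i, 0 < (n i : ℕ)),
    ∏ i, ((((n i : ℕ) : ℚ_[p])) ^ j i)⁻¹


lemma factor_hasSum (p : ℕ) [Fact p.Prime] (u y : ℚ_[p]) (hu : ‖u‖ = 1) (hy : ‖y‖ < 1)
    (k : ℕ) (hk : 0 < k) :
    HasSum (fun m : ℕ => (Nat.choose (k + m - 1) m : ℚ_[p]) * ((u ^ (k + m))⁻¹ * y ^ m))
      (((u - y) ^ k)⁻¹) := by
  have hu0 : u ≠ 0 := by intro h; rw [h] at hu; simp at hu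
  have huy : u - y ≠ 0 := by
    intro h
    rw [sub_eq_zero] at h
    rw [h] at hu
    exact absurd hu (ne_of_lt hy)
  have ht : ‖y / u‖ < 1 := by rw [norm_div, hu, div_one]; exact hy
  have H := hasSum_choose_mul_geometric_of_norm_lt_one (k - 1) ht
  have H2 := H.mul_left ((u ^ k)⁻¹)
  have hkk : k - 1 + 1 = k := by omega
  rw [hkk] at H2
  have hfun : (fun m : ℕ => (Nat.choose (k + m - 1) m : ℚ_[p]) * ((u ^ (k + m))⁻¹ * y ^ m))
      = fun m : ℕ => (u ^ k)⁻¹ * ((Nat.choose (m + (k - 1)) (k - 1) : ℚ_[p]) * (y / u) ^ m) := by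
    funext m
    have hc : (m + (k - 1)).choose (k - 1) = (k + m - 1).choose m := by
      rw [show m + (k - 1) = k + m - 1 by omega]
      rw [← Nat.choose_symm (by omega : m ≤ k + m - 1)]
      congr 1
      omega
    rw [hc, div_pow, pow_add]
    field_simp
  have hval : (((u - y) ^ k)⁻¹ : ℚ_[p]) = (u ^ k)⁻¹ * (1 / (1 - y / u) ^ k) := by
    rw [show (1 : ℚ_[p]) - y / u = (u - y) / u by field_simp]
    rw [div_pow]
    field_simp
  rw [hfun, hval]
  exact H2

lemma factor_summable_norm (p : ℕ) [Fact p.Prime] (u y : ℚ_[p]) (hu : ‖u‖ = 1) (hy : ‖y‖ < 1)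
    (k : ℕ) :
    Summable (fun m : ℕ => ‖(Nat.choose (k + m - 1) m : ℚ_[p]) * ((u ^ (k + m))⁻¹ * y ^ m)‖) := by
  apply Summable.of_nonneg_of_le (fun m => norm_nonneg _)
    (fun m => ?_) (summable_geometric_of_lt_one (norm_nonneg y) hy)
  rw [norm_mul, norm_mul, norm_inv, norm_pow, norm_pow, hu, one_pow, inv_one, one_mul]
  calc ‖(Nat.choose (k + m - 1) m : ℚ_[p])‖ * ‖y‖ ^ m
      ≤ 1 * ‖y‖ ^ m := by
        apply mul_le_mul_of_nonneg_right _ (pow_nonneg (norm_nonneg y) m)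
        have := Padic.norm_int_le_one (p := p) ((k + m - 1).choose m : ℤ)
        simpa using this
    _ = ‖y‖ ^ m := one_mul _

lemma prod_hasSum (p : ℕ) [Fact p.Prime] :
    ∀ (r : ℕ) (f : Fin r → ℕ → ℚ_[p]) (A : Fin r → ℚ_[p]),
    (∀ i, HasSum (f i) (A i)) → (∀ i, Summable fun m => ‖f i m‖) →
    HasSum (fun m : Fin r → ℕ => ∏ i, f i (m i)) (∏ i, A i) ∧
      Summable (fun m : Fin r → ℕ => ‖∏ i, f i (m i)‖) := by
  intro r
  induction r with
  | zero =>
      intro f A _ _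
      constructor
      · have := hasSum_fintype (fun m : Fin 0 → ℕ => ∏ i, f i (m i))
        simpa using this
      · exact (hasSum_fintype _).summable
  | succ r ih =>
      intro f A hf hn
      obtain ⟨ih1, ih2⟩ := ih (fun i => f i.succ) (fun i => A i.succ) (fun i => hf i.succ)
        (fun i => hn i.succ)
      have hnorm' : Summable (fun x : ℕ × (Fin r → ℕ) =>
          ‖f 0 x.1 * ∏ i : Fin r, f i.succ (x.2 i)‖) := by
        have := Summable.mul_norm (hn 0) ih2
        exact this
      have hmul : HasSum (fun x : ℕ × (Fin r → ℕ) => f 0 x.1 * ∏ i : Fin r, f i.succ (x.2 i))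
          (A 0 * ∏ i : Fin r, A i.succ) := by
        have := HasSum.mul (hf 0) ih1 hnorm'.of_norm
        exact this
      set e : ℕ × (Fin r → ℕ) ≃ (Fin (r+1) → ℕ) := Fin.consEquiv (fun _ => ℕ) with he
      have key : ∀ m : Fin (r+1) → ℕ,
          ∏ i, f i (m i) = f 0 (m 0) * ∏ i : Fin r, f i.succ (m i.succ) :=
        fun m => Fin.prod_univ_succ _
      constructor
      · rw [← Equiv.hasSum_iff e]
        have heq : (fun m : Fin (r+1) → ℕ => ∏ i, f i (m i)) ∘ e
            = fun x : ℕ × (Fin r → ℕ) => f 0 x.1 * ∏ i : Fin r, f i.succ (x.2 i) := by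
          funext x
          simp [key, he, Fin.consEquiv]
        rw [heq, Fin.prod_univ_succ]
        exact hmul
      · rw [← Equiv.summable_iff e]
        have heq : (fun m : Fin (r+1) → ℕ => ‖∏ i, f i (m i)‖) ∘ e
            = fun x : ℕ × (Fin r → ℕ) => ‖f 0 x.1 * ∏ i : Fin r, f i.succ (x.2 i)‖ := by
          funext x
          simp [key, he, Fin.consEquiv]
        rw [heq]
        exact hnorm'

theorem stmt_15 (p : ℕ) [Fact p.Prime] (r : ℕ) (hr : 1 ≤ r) (k : Fin r → ℕ)
    (hk : ∀ i, 0 < k i) (a : ℤ) :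
    Filter.Tendsto
      (fun M : ℕ => ∑ N ∈ Finset.range M,
        (∑ m ∈ Finset.Nat.antidiagonalTuple r N,
            (∏ i, (Nat.choose (k i + m i - 1) (m i) : ℚ_[p])) * Spr p r (fun i => k i + m i))
          * (-((a : ℚ_[p]) * (p : ℚ_[p]))) ^ N)
      Filter.atTop
      (nhds (∑ n ∈ Finset.univ.filter
          (fun n : Fin r → Fin p => StrictMono (fun i => (n i : ℕ)) ∧ ∀ i, 0 < (n i : ℕ)),
        ∏ i, ((((n i : ℕ) : ℚ_[p]) + (a : ℚ_[p]) * (p : ℚ_[p])) ^ k i)⁻¹)) := by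
  classical
  set y : ℚ_[p] := -((a : ℚ_[p]) * (p : ℚ_[p])) with hy_def
  have hp2 : 2 ≤ p := (Fact.out : p.Prime).two_le
  have hy : ‖y‖ < 1 := by
    rw [hy_def, norm_neg, norm_mul]
    calc ‖(a : ℚ_[p])‖ * ‖(p : ℚ_[p])‖ ≤ 1 * (p : ℝ)⁻¹ := by
          apply mul_le_mul (Padic.norm_int_le_one a) (le_of_eq (Padic.norm_p))
            (norm_nonneg _) zero_le_one
      _ = (p : ℝ)⁻¹ := one_mul _
      _ < 1 := by
          rw [inv_lt_one_iff₀]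
          right
          exact_mod_cast by omega
  set S : Finset (Fin r → Fin p) := Finset.univ.filter
      (fun n : Fin r → Fin p => StrictMono (fun i => (n i : ℕ)) ∧ ∀ i, 0 < (n i : ℕ)) with hS_def
  -- per n ∈ S the norm of each coordinate is 1
  have hunorm : ∀ n ∈ S, ∀ i : Fin r, ‖(((n i : ℕ) : ℚ_[p]))‖ = 1 := by
    intro n hn i
    rw [hS_def, Finset.mem_filter] at hn
    have hpos : 0 < (n i : ℕ) := hn.2.2 i
    have hlt : (n i : ℕ) < p := (n i).isLt
    have hcast : (((n i : ℕ) : ℚ_[p])) = ((((n i : ℕ) : ℤ)) : ℚ_[p]) := by push_cast; ring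
    rw [hcast]
    refine le_antisymm (Padic.norm_int_le_one _) (not_lt.mp ?_)
    rw [Padic.norm_intCast_lt_one_iff]
    intro hdvd
    have : (p : ℤ) ∣ ((n i : ℕ) : ℤ) := hdvd
    rw [Int.natCast_dvd_natCast] at this
    have := Nat.le_of_dvd hpos this
    omega
  -- the family of terms
  set t : (Fin r → Fin p) → (Fin r → ℕ) → ℚ_[p] := fun n m =>
    ∏ i, ((Nat.choose (k i + m i - 1) (m i) : ℚ_[p]) *
      (((((n i : ℕ) : ℚ_[p])) ^ (k i + m i))⁻¹ * y ^ m i)) with ht_def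
  have hper : ∀ n ∈ S, HasSum (t n)
      (∏ i, ((((n i : ℕ) : ℚ_[p]) + (a : ℚ_[p]) * (p : ℚ_[p])) ^ k i)⁻¹) := by
    intro n hn
    have := (prod_hasSum p r
      (fun i => fun m : ℕ =>
        (Nat.choose (k i + m - 1) m : ℚ_[p]) * (((((n i : ℕ) : ℚ_[p])) ^ (k i + m))⁻¹ * y ^ m))
      (fun i => (((((n i : ℕ) : ℚ_[p])) - y) ^ k i)⁻¹)
      (fun i => factor_hasSum p _ y (hunorm n hn i) hy (k i) (hk i))
      (fun i => factor_summable_norm p _ y (hunorm n hn i) hy (k i))).1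
    have hsub : ∀ i : Fin r, (((n i : ℕ) : ℚ_[p])) - y
        = ((n i : ℕ) : ℚ_[p]) + (a : ℚ_[p]) * (p : ℚ_[p]) := by
      intro i; rw [hy_def, sub_neg_eq_add]
    simp only [hsub] at this
    exact this
  -- sum over n ∈ S
  have hsumS : HasSum (fun m : Fin r → ℕ => ∑ n ∈ S, t n m)
      (∑ n ∈ S, ∏ i, ((((n i : ℕ) : ℚ_[p]) + (a : ℚ_[p]) * (p : ℚ_[p])) ^ k i)⁻¹) :=
    hasSum_sum hper
  -- regroup along antidiagonal tuples
  set e := Finset.Nat.sigmaAntidiagonalTupleEquivTuple r with he_def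
  have hsig : HasSum ((fun m : Fin r → ℕ => ∑ n ∈ S, t n m) ∘ e)
      (∑ n ∈ S, ∏ i, ((((n i : ℕ) : ℚ_[p]) + (a : ℚ_[p]) * (p : ℚ_[p])) ^ k i)⁻¹) :=
    (Equiv.hasSum_iff e).mpr hsumS
  have hgrp : HasSum (fun N : ℕ => ∑ m ∈ Finset.Nat.antidiagonalTuple r N, ∑ n ∈ S, t n m)
      (∑ n ∈ S, ∏ i, ((((n i : ℕ) : ℚ_[p]) + (a : ℚ_[p]) * (p : ℚ_[p])) ^ k i)⁻¹) := by
    apply hsig.sigma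
    intro N
    rw [← Finset.sum_coe_sort (Finset.Nat.antidiagonalTuple r N)]
    exact hasSum_fintype _
  -- identify the grouped sums with the stated coefficients
  have hcoeff : ∀ N : ℕ, ∑ m ∈ Finset.Nat.antidiagonalTuple r N, ∑ n ∈ S, t n m
      = (∑ m ∈ Finset.Nat.antidiagonalTuple r N,
          (∏ i, (Nat.choose (k i + m i - 1) (m i) : ℚ_[p])) * Spr p r (fun i => k i + m i))
        * y ^ N := by
    intro N
    rw [Finset.sum_mul]
    apply Finset.sum_congr rfl
    intro m hm
    have hmN : ∑ i, m i = N := Finset.Nat.mem_antidiagonalTuple.mp hm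
    have hterm : ∀ n ∈ S, t n m
        = (∏ i, (Nat.choose (k i + m i - 1) (m i) : ℚ_[p]))
          * ((∏ i, (((((n i : ℕ) : ℚ_[p])) ^ (k i + m i))⁻¹)) * y ^ N) := by
      intro n _
      rw [ht_def]
      simp only [Finset.prod_mul_distrib, Finset.prod_pow_eq_pow_sum, hmN, mul_assoc]
    rw [Finset.sum_congr rfl hterm, ← Finset.mul_sum, ← Finset.sum_mul]
    rw [Spr]
    rw [hS_def]
    ring
  have hfinal : HasSum (fun N : ℕ =>
      (∑ m ∈ Finset.Nat.antidiagonalTuple r N,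
          (∏ i, (Nat.choose (k i + m i - 1) (m i) : ℚ_[p])) * Spr p r (fun i => k i + m i))
        * y ^ N)
      (∑ n ∈ S, ∏ i, ((((n i : ℕ) : ℚ_[p]) + (a : ℚ_[p]) * (p : ℚ_[p])) ^ k i)⁻¹) := by
    have := hgrp
    rwa [funext hcoeff] at this
  exact hfinal.tendsto_sum_nat
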